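/- Let N be a positive integer and v a nonzero complex number with v^N = −1. Then for every integer m and all integers j, l with 1 ≤ j ≤ N−1 and 0 ≤ l ≤ N−1, one has D_m(N−j, l) + D_m(j, l) = (mN/2) · S(j−l, j+l). -/

import Mathlib

/-!
Since `v ^ N = -1`, replacing `j` by `N - j` leaves every bracket `{r}` unchanged
(`{N - r} = {r}`) and flips the sign of `v ^ j + v ^ (-j)`. So in `D_m(N - j, l) + D_m(j, l)`
the first summands cancel and the second ones add up to `(mN/2) {j} ∏_{k=1}^l {j-k}{j+k}`,
which is `(mN/2) S(j - l, j + l)` with the factors regrouped.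
-/

open Complex

/-- `{n} = v^n - v^{-n}` for a nonzero complex number `v`. -/
noncomputable def brv (v : ℂ) (n : ℤ) : ℂ := v ^ n - v ^ (-n)

/-- `S(k,l) = ∏_{k ≤ r ≤ l} {r}`. -/
noncomputable def SSv (v : ℂ) (k l : ℤ) : ℂ := ∏ r ∈ Finset.Icc k l, brv v r

/-- `A(j,k) = {j-k}{j+k}`. -/
noncomputable def AAv (v : ℂ) (j k : ℤ) : ℂ := brv v (j - k) * brv v (j + k)

/-- `D_m(j,l)` from the context. -/
noncomputable def DDv (v : ℂ) (m j : ℤ) (l : ℕ) : ℂ :=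
  (v ^ j + v ^ (-j)) *
      ((∏ k ∈ Finset.Icc 1 l, AAv v j (k : ℤ)) +
        2 * (brv v j) ^ 2 *
          ∑ k ∈ Finset.Icc 1 l, ∏ k' ∈ (Finset.Icc 1 l).erase k, AAv v j (k' : ℤ)) +
    ((m : ℂ) * (j : ℂ) / 2) * brv v j * ∏ k ∈ Finset.Icc 1 l, AAv v j (k : ℤ)

lemma ne_zero_of_pow_eq_neg_one {K : Type*} [Field K] [CharZero K] {v : K} {N : ℕ}
    (hvN : v ^ N = -1) : v ≠ 0 := by
  rintro rfl
  rcases N with _ | N <;> norm_num at hvN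

lemma zpow_natCast_sub_of_pow_eq_neg_one {K : Type*} [Field K] [CharZero K] {v : K} {N : ℕ}
    (hvN : v ^ N = -1) (a : ℤ) : v ^ ((N : ℤ) - a) = -v ^ (-a) := by
  rw [zpow_sub₀ (ne_zero_of_pow_eq_neg_one hvN), zpow_natCast, hvN, zpow_neg, neg_div, one_div]

lemma zpow_sub_natCast_of_pow_eq_neg_one {K : Type*} [Field K] [CharZero K] {v : K} {N : ℕ}
    (hvN : v ^ N = -1) (a : ℤ) : v ^ (a - N) = -v ^ a := by
  rw [zpow_sub₀ (ne_zero_of_pow_eq_neg_one hvN), zpow_natCast, hvN, div_neg, div_one]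

lemma brv_natCast_sub {v : ℂ} {N : ℕ} (hvN : v ^ N = -1) (a : ℤ) :
    brv v ((N : ℤ) - a) = brv v a := by
  rw [brv, brv, neg_sub, zpow_natCast_sub_of_pow_eq_neg_one hvN,
    zpow_sub_natCast_of_pow_eq_neg_one hvN]
  ring

lemma AAv_natCast_sub {v : ℂ} {N : ℕ} (hvN : v ^ N = -1) (j k : ℤ) :
    AAv v ((N : ℤ) - j) k = AAv v j k := by
  rw [AAv, AAv, show (N : ℤ) - j - k = N - (j + k) by ring,
    show (N : ℤ) - j + k = N - (j - k) by ring, brv_natCast_sub hvN, brv_natCast_sub hvN,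
    mul_comm]

lemma zpow_add_zpow_neg_natCast_sub {v : ℂ} {N : ℕ} (hvN : v ^ N = -1) (j : ℤ) :
    v ^ ((N : ℤ) - j) + v ^ (-((N : ℤ) - j)) = -(v ^ j + v ^ (-j)) := by
  rw [neg_sub, zpow_natCast_sub_of_pow_eq_neg_one hvN, zpow_sub_natCast_of_pow_eq_neg_one hvN]
  ring

lemma brv_mul_prod_AAv (v : ℂ) (j : ℤ) (l : ℕ) :
    brv v j * ∏ k ∈ Finset.Icc 1 l, AAv v j (k : ℤ) = SSv v (j - l) (j + l) := by
  induction l with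
  | zero => simp [SSv]
  | succ n ih =>
    have hIcc : Finset.Icc (j - (n + 1 : ℕ)) (j + (n + 1 : ℕ)) =
        insert (j - (n + 1 : ℕ)) (insert (j + (n + 1 : ℕ)) (Finset.Icc (j - n) (j + n))) := by
      ext x
      simp only [Finset.mem_Icc, Finset.mem_insert]
      omega
    have hlow : j - (n + 1 : ℕ) ∉ insert (j + (n + 1 : ℕ)) (Finset.Icc (j - n) (j + n)) := by
      simp only [Finset.mem_insert, Finset.mem_Icc]
      omega
    have htop : j + (n + 1 : ℕ) ∉ Finset.Icc (j - n) (j + n) := by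
      simp only [Finset.mem_Icc]
      omega
    rw [Finset.prod_Icc_succ_top (by omega), ← mul_assoc, ih, SSv, SSv, hIcc,
      Finset.prod_insert hlow, Finset.prod_insert htop, AAv]
    push_cast
    ring

theorem D_add_D_eq_general (N : ℕ) (v : ℂ) (hvN : v ^ N = -1)
    (m : ℤ) (j l : ℕ) :
    DDv v m ((N : ℤ) - (j : ℤ)) l + DDv v m (j : ℤ) l =
      ((m : ℂ) * (N : ℂ) / 2) * SSv v ((j : ℤ) - (l : ℤ)) ((j : ℤ) + (l : ℤ)) := by
  simp only [DDv, AAv_natCast_sub hvN, brv_natCast_sub hvN, zpow_add_zpow_neg_natCast_sub hvN]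
  push_cast
  linear_combination ((m : ℂ) * N / 2) * brv_mul_prod_AAv v j l

/-- If `v^N = -1`, then `D_m(N-j,l) + D_m(j,l) = (mN/2) S(j-l,j+l)` for all
`1 ≤ j ≤ N-1` and `0 ≤ l ≤ N-1`. -/
theorem D_add_D_eq (N : ℕ) (hN : 0 < N) (v : ℂ) (hv : v ≠ 0) (hvN : v ^ N = -1)
    (m : ℤ) (j l : ℕ) (hj1 : 1 ≤ j) (hj2 : j ≤ N - 1) (hl : l ≤ N - 1) :
    DDv v m ((N : ℤ) - (j : ℤ)) l + DDv v m (j : ℤ) l =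
      ((m : ℂ) * (N : ℂ) / 2) * SSv v ((j : ℤ) - (l : ℤ)) ((j : ℤ) + (l : ℤ)) :=
  D_add_D_eq_general N v hvN m j l
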